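/- Suppose the implicit solution ξ(k,p,y) of ξ = ∑_{i=1}^n exp((1/θ)(yⁱ - u'(F(k,p) - ξ)) - 1) is differentiable (by the implicit function theorem). Then for all (k,p,y) with 0 < ξ(k,p,y) < F(k,p): |∇_k ξ(k,p,y)| ≤ |∇_k F(k,p)|, |∇_p ξ(k,p,y)| ≤ |∇_p F(k,p)|, and |∇_y ξ(k,p,y) · u''(F(k,p) - ξ(k,p,y))| ≤ 1. -/

import Mathlib

open Real Set

lemma norm_gradient_eq' {E : Type*} [NormedAddCommGroup E] [InnerProductSpace ℝ E]
    [CompleteSpace E] (f : E → ℝ) (x : E) : ‖gradient f x‖ = ‖fderiv ℝ f x‖ := by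
  unfold gradient
  exact LinearIsometryEquiv.norm_map _ _

lemma proj_norm_le' {n : ℕ} (i : Fin n) :
    ‖(EuclideanSpace.proj i : EuclideanSpace ℝ (Fin n) →L[ℝ] ℝ)‖ ≤ 1 := by
  apply ContinuousLinearMap.opNorm_le_bound _ zero_le_one
  intro x
  rw [one_mul]
  have : ‖x i‖ ≤ ‖x‖ := by
    rw [EuclideanSpace.norm_eq]
    rw [show ‖x i‖ = Real.sqrt (‖x i‖^2) by rw [Real.sqrt_sq (norm_nonneg _)]]
    exact Real.sqrt_le_sqrt (Finset.single_le_sum (fun j _ => sq_nonneg ‖x j‖) (Finset.mem_univ i))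
  simpa using this

lemma second_deriv_nonpos' (u : ℝ → ℝ) (hu : ContDiffOn ℝ 2 u (Ioi 0))
    (hconc : StrictConcaveOn ℝ (Ioi 0) u) {c : ℝ} (hc : c ∈ Ioi (0:ℝ)) :
    deriv (deriv u) c ≤ 0 := by
  have hud : ∀ x ∈ Ioi (0:ℝ), DifferentiableAt ℝ u x := fun x hx =>
    (hu.differentiableOn two_ne_zero).differentiableAt (isOpen_Ioi.mem_nhds hx)
  have hanti : StrictAntiOn (deriv u) (Ioi 0) := hconc.strictAntiOn_deriv hud
  have hvd : DifferentiableAt ℝ (deriv u) c :=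
    ((hu.deriv_of_isOpen isOpen_Ioi le_rfl).differentiableOn one_ne_zero).differentiableAt
      (isOpen_Ioi.mem_nhds hc)
  have htend : Filter.Tendsto (slope (deriv u) c) (nhdsWithin c (Ioi c)) (nhds (deriv (deriv u) c)) :=
    (hasDerivAt_iff_tendsto_slope.1 hvd.hasDerivAt).mono_left
      (nhdsWithin_mono c (fun z hz => ne_of_gt hz))
  refine le_of_tendsto htend (Filter.eventually_of_mem self_mem_nhdsWithin fun z hz => ?_)
  have hz0 : z ∈ Ioi (0:ℝ) := lt_trans hc.out hz
  have : deriv u z < deriv u c := hanti hc hz0 hz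
  rw [slope_def_field]
  exact div_nonpos_of_nonpos_of_nonneg (by linarith) (by have := hz.out; linarith)

set_option maxHeartbeats 1000000 in
set_option synthInstance.maxHeartbeats 200000 in
/-- Gradient bounds on the implicit total-investment function ξ. -/
theorem stmt4 (n d : ℕ) (θ : ℝ) (hθ : 0 < θ) (u : ℝ → ℝ)
    (hu : ContDiffOn ℝ 2 u (Ioi 0)) (hmono : MonotoneOn u (Ioi 0))
    (hconc : StrictConcaveOn ℝ (Ioi 0) u)
    (F : EuclideanSpace ℝ (Fin n) → EuclideanSpace ℝ (Fin d) → ℝ)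
    (hFk : ∀ p, Differentiable ℝ (fun k => F k p))
    (hFp : ∀ k, Differentiable ℝ (F k))
    (ξ : EuclideanSpace ℝ (Fin n) → EuclideanSpace ℝ (Fin d) → EuclideanSpace ℝ (Fin n) → ℝ)
    (hξk : ∀ p y, Differentiable ℝ (fun k => ξ k p y))
    (hξp : ∀ k y, Differentiable ℝ (fun p => ξ k p y))
    (hξy : ∀ k p, Differentiable ℝ (fun y => ξ k p y))
    (heq : ∀ k p y, ξ k p y
      = ∑ i, Real.exp ((1/θ) * (y i - deriv u (F k p - ξ k p y)) - 1)) :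
    ∀ k p y, 0 < ξ k p y → ξ k p y < F k p →
      ‖gradient (fun k' => ξ k' p y) k‖ ≤ ‖gradient (fun k' => F k' p) k‖ ∧
      ‖gradient (fun p' => ξ k p' y) p‖ ≤ ‖gradient (F k) p‖ ∧
      ‖gradient (fun y' => ξ k p y') y‖ * |deriv (deriv u) (F k p - ξ k p y)| ≤ 1 := by
  intro k p y hpos hlt
  set v : ℝ → ℝ := deriv u with hv
  set c : ℝ := F k p - ξ k p y with hcdef
  have hc : c ∈ Ioi (0:ℝ) := by simp [hcdef]; linarith
  set v' : ℝ := deriv v c with hv'def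
  have hv'np : v' ≤ 0 := second_deriv_nonpos' u hu hconc hc
  have hvd : DifferentiableAt ℝ v c :=
    ((hu.deriv_of_isOpen isOpen_Ioi le_rfl).differentiableOn one_ne_zero).differentiableAt
      (isOpen_Ioi.mem_nhds hc)
  have hder : HasDerivAt v v' c := hvd.hasDerivAt
  -- the one-dimensional function φ and its derivative
  set E : Fin n → ℝ := fun i => Real.exp ((1/θ) * (y i - v c) - 1) with hE
  have hEpos : ∀ i, 0 < E i := fun i => Real.exp_pos _
  have hsum : ∑ i, E i = ξ k p y := (heq k p y).symm
  set a : ℝ := ξ k p y * ((1/θ) * (-v')) with hadef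
  have ha : 0 ≤ a := by
    apply mul_nonneg (le_of_lt hpos)
    apply mul_nonneg (by positivity) (by linarith)
  set φ : ℝ → ℝ := fun t => ∑ i, Real.exp ((1/θ) * (y i - v t) - 1) with hφdef
  have hφ : HasDerivAt φ a c := by
    have h1 : HasDerivAt φ (∑ i, E i * ((1/θ) * (0 - v'))) c := by
      apply HasDerivAt.fun_sum
      intro i _
      exact ((((hasDerivAt_const c (y i)).sub hder).const_mul (1/θ)).sub_const 1).exp
    convert h1 using 1
    rw [← Finset.sum_mul, hsum, hadef]
    ring
  -- generic fderiv argument for k and p directions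
  have key : ∀ {W : Type} [NormedAddCommGroup W] [InnerProductSpace ℝ W] [CompleteSpace W]
      (G H : W → ℝ) (w : W), DifferentiableAt ℝ G w → DifferentiableAt ℝ H w →
      (∀ w', H w' = φ (G w' - H w')) → G w - H w = c →
      ‖fderiv ℝ H w‖ ≤ ‖fderiv ℝ G w‖ := by
    intro W _ _ _ G H w hG hH hHeq hGH
    set DG := fderiv ℝ G w
    set DH := fderiv ℝ H w
    have hcomp : HasFDerivAt (fun w' => φ (G w' - H w')) (a • (DG - DH)) w := by
      refine HasDerivAt.comp_hasFDerivAt_of_eq w hφ (hG.hasFDerivAt.sub hH.hasFDerivAt) ?_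
      rw [hGH]
    have hH2 : HasFDerivAt H (a • (DG - DH)) w := by
      refine hcomp.congr_of_eventuallyEq ?_
      filter_upwards with w' using (hHeq w')
    have eq1 : DH = a • (DG - DH) := hH.hasFDerivAt.unique hH2
    have e2 : (1 + a) • DH = a • DG := by
      rw [add_smul, one_smul]
      nth_rewrite 1 [eq1]
      rw [smul_sub]; abel
    have e3 : (1 + a) * ‖DH‖ = a * ‖DG‖ := by
      have := congrArg norm e2
      rwa [norm_smul, norm_smul, Real.norm_eq_abs, Real.norm_eq_abs,
        abs_of_nonneg (by linarith : (0:ℝ) ≤ 1 + a), abs_of_nonneg ha] at this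
    nlinarith [norm_nonneg DH, norm_nonneg DG]
  refine ⟨?_, ?_, ?_⟩
  · rw [norm_gradient_eq', norm_gradient_eq']
    exact key (fun k' => F k' p) (fun k' => ξ k' p y) k (hFk p k) (hξk p y k)
      (fun k' => by show ξ k' p y = φ (F k' p - ξ k' p y); exact heq k' p y) rfl
  · rw [norm_gradient_eq', norm_gradient_eq']
    exact key (F k) (fun p' => ξ k p' y) p (hFp k p) (hξp k y p)
      (fun p' => by show ξ k p' y = φ (F k p' - ξ k p' y); exact heq k p' y) rfl
  -- the y-part
  · rw [norm_gradient_eq']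
    set Dy := fderiv ℝ (fun y' => ξ k p y') y with hDy
    have hcomp : HasFDerivAt (fun y' => ∑ i, Real.exp ((1/θ) * (y' i - v (F k p - ξ k p y')) - 1))
        (∑ i, (E i) • ((1/θ : ℝ) • ((EuclideanSpace.proj i : EuclideanSpace ℝ (Fin n) →L[ℝ] ℝ)
          - v' • (-Dy)))) y := by
      apply HasFDerivAt.fun_sum
      intro i _
      have hproj : HasFDerivAt (fun y' : EuclideanSpace ℝ (Fin n) => y' i)
          (EuclideanSpace.proj i : EuclideanSpace ℝ (Fin n) →L[ℝ] ℝ) y :=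
        (EuclideanSpace.proj i : EuclideanSpace ℝ (Fin n) →L[ℝ] ℝ).hasFDerivAt
      have hin : HasFDerivAt (fun y' => F k p - ξ k p y') (-Dy) y :=
        (hξy k p y).hasFDerivAt.const_sub (F k p)
      have hvy : HasFDerivAt (fun y' => v (F k p - ξ k p y')) (v' • (-Dy)) y :=
        HasDerivAt.comp_hasFDerivAt_of_eq y hder hin rfl
      exact ((((hproj.sub hvy).const_mul (1/θ)).sub_const 1).exp)
    have hD2 : HasFDerivAt (fun y' => ξ k p y')
        (∑ i, (E i) • ((1/θ : ℝ) • ((EuclideanSpace.proj i : EuclideanSpace ℝ (Fin n) →L[ℝ] ℝ)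
          - v' • (-Dy)))) y := by
      refine hcomp.congr_of_eventuallyEq ?_
      filter_upwards with y' using (heq k p y')
    have eq1 : Dy = ∑ i, (E i) • ((1/θ : ℝ) • ((EuclideanSpace.proj i : EuclideanSpace ℝ (Fin n) →L[ℝ] ℝ)
          - v' • (-Dy))) := (hξy k p y).hasFDerivAt.unique hD2
    -- simplify
    set S : EuclideanSpace ℝ (Fin n) →L[ℝ] ℝ :=
      ∑ i, (E i * (1/θ)) • (EuclideanSpace.proj i : EuclideanSpace ℝ (Fin n) →L[ℝ] ℝ) with hS
    have hsum2 : ∑ i, (E i) • ((1/θ : ℝ) • ((EuclideanSpace.proj i : EuclideanSpace ℝ (Fin n) →L[ℝ] ℝ)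
          - v' • (-Dy))) = S + (-a) • Dy := by
      have step1 : ∀ i : Fin n, (E i) • ((1/θ : ℝ) • ((EuclideanSpace.proj i : EuclideanSpace ℝ (Fin n) →L[ℝ] ℝ)
          - v' • (-Dy))) = (E i * (1/θ)) • (EuclideanSpace.proj i : EuclideanSpace ℝ (Fin n) →L[ℝ] ℝ)
          + (E i * (1/θ) * v') • Dy := by
        intro i
        module
      rw [Finset.sum_congr rfl (fun i _ => step1 i), Finset.sum_add_distrib, ← Finset.sum_smul, hS]
      congr 1
      have : ∑ i, E i * (1/θ) * v' = -a := by
        calc ∑ i, E i * (1/θ) * v' = ∑ i, E i * ((1/θ) * v') := by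
              exact Finset.sum_congr rfl (fun i _ => by ring)
          _ = (∑ i, E i) * ((1/θ) * v') := by rw [Finset.sum_mul]
          _ = -a := by rw [hsum, hadef]; ring
      rw [this]
    have eq2 : Dy = S + (-a) • Dy := eq1.trans hsum2
    have e2 : (1 + a) • Dy = S := by
      rw [add_smul, one_smul]
      nth_rewrite 1 [eq2]
      module
    have hSnorm : ‖S‖ ≤ ξ k p y * (1/θ) := by
      calc ‖S‖ ≤ ∑ i, ‖(E i * (1/θ)) • (EuclideanSpace.proj i : EuclideanSpace ℝ (Fin n) →L[ℝ] ℝ)‖ :=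
            norm_sum_le _ _
        _ ≤ ∑ i, E i * (1/θ) := by
            apply Finset.sum_le_sum
            intro i _
            calc ‖(E i * (1/θ)) • (EuclideanSpace.proj i : EuclideanSpace ℝ (Fin n) →L[ℝ] ℝ)‖
                ≤ ‖E i * (1/θ)‖ * ‖(EuclideanSpace.proj i : EuclideanSpace ℝ (Fin n) →L[ℝ] ℝ)‖ :=
                  ContinuousLinearMap.opNorm_smul_le _ _
              _ = (E i * (1/θ)) * ‖(EuclideanSpace.proj i : EuclideanSpace ℝ (Fin n) →L[ℝ] ℝ)‖ := by
                  rw [Real.norm_eq_abs, abs_of_nonneg (by positivity)]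
              _ ≤ (E i * (1/θ)) * 1 :=
                  mul_le_mul_of_nonneg_left (proj_norm_le' i) (by positivity)
              _ = E i * (1/θ) := mul_one _
        _ = ξ k p y * (1/θ) := by rw [← Finset.sum_mul, hsum]
    have e3 : (1 + a) * ‖Dy‖ ≤ ξ k p y * (1/θ) := by
      have := congrArg norm e2
      rw [norm_smul, Real.norm_eq_abs, abs_of_nonneg (by linarith : (0:ℝ) ≤ 1 + a)] at this
      linarith [this ▸ hSnorm]
    have habs : |deriv (deriv u) (F k p - ξ k p y)| = -v' := by
      rw [abs_of_nonpos hv'np]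
    rw [habs]
    have hkey : ξ k p y * (1/θ) * (-v') = a := by rw [hadef]; ring
    have hX0 : 0 ≤ ‖Dy‖ * (-v') := mul_nonneg (norm_nonneg _) (by linarith)
    have h4 : (1 + a) * (‖Dy‖ * (-v')) ≤ a := by
      have h5 := mul_le_mul_of_nonneg_right e3 (by linarith : (0:ℝ) ≤ -v')
      calc (1 + a) * (‖Dy‖ * (-v')) = (1 + a) * ‖Dy‖ * (-v') := by ring
        _ ≤ ξ k p y * (1/θ) * (-v') := h5
        _ = a := hkey
    nlinarith [hX0, h4, ha]
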